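/- For every m ∈ ℕ there exists a positive constant C (depending only on m) such that for every real Hilbert space H, every bounded nonnegative selfadjoint operator A : H →L[ℝ] H, and every f ∈ H, ∫₀^∞ (1+t)^m ⟨A^{m+1} exp(−2t • A) f, f⟩ dt ≤ C (‖f‖² + ⟨A^m f, f⟩). (This is the smoothing estimate ∫₀^∞ (1+t)^m ‖A^{(m+1)/2} e^{−tA} f‖² dt ≤ C ‖f‖_{D(A^{m/2})}² used in the proof of the asymptotic expansion.) -/

import Mathlib

/-!
With `φ k t = ⟪A ^ k (exp (-2t • A) f), f⟫ ≥ 0` one has `∂ₜ φ k = -2 φ (k + 1)`, so integrating by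
parts, `I k T = ∫₀ᵀ (1 + t) ^ k φ (k + 1) t` satisfies
`I (k + 1) T ≤ (φ (k + 1) 0 + (k + 1) I k T) / 2`; hence `I k T ≤ k! D` whenever `φ j 0 ≤ D` for
`j ≤ k`. The choice `D = ‖f‖² + ⟪A ^ m f, f⟫` works because, by Cauchy–Schwarz for the positive
forms `⟪A ^ j ·, ·⟫`, the sequence `j ↦ ⟪A ^ j f, f⟫` is log-convex, hence bounded on `[0, m]` by
its values at the endpoints.
-/

open scoped RealInnerProductSpace
open MeasureTheory Set Filter

universe u

theorem le_succ_succ_of_le_succ_of_sq_le_mul {c : ℕ → ℝ} (hc_nonneg : ∀ j, 0 ≤ c j)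
    (hc : ∀ j, c (j + 1) ^ 2 ≤ c j * c (j + 2)) {j : ℕ} (hj : c j ≤ c (j + 1)) :
    c (j + 1) ≤ c (j + 2) := by
  rcases (hc_nonneg (j + 1)).eq_or_lt with h | h
  · exact h ▸ hc_nonneg (j + 2)
  · nlinarith [hc j, hc_nonneg (j + 2)]

theorem le_max_endpoints_of_sq_le_mul {c : ℕ → ℝ} (hc_nonneg : ∀ j, 0 ≤ c j)
    (hc : ∀ j, c (j + 1) ^ 2 ≤ c j * c (j + 2)) {k m : ℕ} (hkm : k ≤ m) :
    c k ≤ max (c 0) (c m) := by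
  by_cases hdec : ∀ j < k, c (j + 1) ≤ c j
  · refine le_max_of_le_left ?_
    suffices ∀ n ≤ k, c n ≤ c 0 from this k le_rfl
    intro n hn
    induction n with
    | zero => exact le_rfl
    | succ n ih => exact (hdec n hn).trans (ih (by omega))
  · push Not at hdec
    obtain ⟨j, hjk, hj⟩ := hdec
    have hmono : ∀ n ≥ j, c n ≤ c (n + 1) := fun n hn => by
      induction n, hn using Nat.le_induction with
      | base => exact hj.le
      | succ n _ ih => exact le_succ_succ_of_le_succ_of_sq_le_mul hc_nonneg hc ih
    exact le_max_of_le_right <| monotoneOn_nat_Ici_of_le_succ hmono hjk.le (hjk.le.trans hkm) hkm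

theorem setIntegral_Ioi_le_of_forall_intervalIntegral_le {g : ℝ → ℝ} {a B : ℝ}
    (hg : Continuous g) (hg_nonneg : ∀ t ≥ a, 0 ≤ g t) (hB : ∀ T ≥ a, ∫ t in a..T, g t ≤ B) :
    ∫ t in Ioi a, g t ≤ B := by
  have hnorm : ∀ T ≥ a, ∫ t in a..T, ‖g t‖ = ∫ t in a..T, g t := fun T hT =>
    intervalIntegral.integral_congr fun t ht => by
      rw [uIcc_of_le hT] at ht
      exact Real.norm_of_nonneg (hg_nonneg t ht.1)
  have hint : IntegrableOn g (Ioi a) :=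
    integrableOn_Ioi_of_intervalIntegral_norm_bounded B a (fun _ => hg.integrableOn_Ioc)
      tendsto_id ((eventually_ge_atTop a).mono fun T hT => (hnorm T hT).trans_le (hB T hT))
  exact le_of_tendsto (intervalIntegral_tendsto_integral_Ioi a hint tendsto_id)
    ((eventually_ge_atTop a).mono hB)

section SemigroupIntegrals

variable {φ : ℕ → ℝ → ℝ}

theorem integral_one_add_pow_succ_mul_eq (hφ : ∀ k t, HasDerivAt (φ k) (-2 * φ (k + 1) t) t)
    (k : ℕ) (T : ℝ) :
    ∫ t in (0 : ℝ)..T, (1 + t) ^ (k + 1) * φ (k + 2) t =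
      (φ (k + 1) 0 - (1 + T) ^ (k + 1) * φ (k + 1) T) / 2 +
        (k + 1) / 2 * ∫ t in (0 : ℝ)..T, (1 + t) ^ k * φ (k + 1) t := by
  have hcont : Continuous (φ (k + 2)) :=
    continuous_iff_continuousAt.2 fun t => (hφ _ t).continuousAt
  have hpow : ∀ t ∈ uIcc (0 : ℝ) T,
      HasDerivAt (fun s : ℝ => (1 + s) ^ (k + 1)) ((k + 1) * (1 + t) ^ k) t := fun t _ => by
    simpa using ((hasDerivAt_id t).const_add (1 : ℝ)).fun_pow (k + 1)
  have ibp := intervalIntegral.integral_mul_deriv_eq_deriv_mul hpow (fun t _ => hφ (k + 1) t)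
    ((by fun_prop : Continuous fun t : ℝ => ((k : ℝ) + 1) * (1 + t) ^ k).intervalIntegrable 0 T)
    ((continuous_const.mul hcont).intervalIntegrable 0 T)
  simp only [mul_left_comm _ (-2 : ℝ), mul_assoc, intervalIntegral.integral_const_mul] at ibp
  norm_num at ibp
  linarith

theorem integral_one_add_pow_mul_le_factorial
    (hφ : ∀ k t, HasDerivAt (φ k) (-2 * φ (k + 1) t) t) (hφ_nonneg : ∀ k, ∀ t ≥ 0, 0 ≤ φ k t)
    {D : ℝ} (k : ℕ) (hD : ∀ j ≤ k, φ j 0 ≤ D) {T : ℝ} (hT : 0 ≤ T) :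
    ∫ t in (0 : ℝ)..T, (1 + t) ^ k * φ (k + 1) t ≤ k.factorial * D := by
  induction k with
  | zero =>
    have hcont : Continuous (φ 1) := continuous_iff_continuousAt.2 fun t => (hφ 1 t).continuousAt
    have hFTC : ∫ t in (0 : ℝ)..T, φ 1 t = (φ 0 0 - φ 0 T) / 2 := by
      rw [intervalIntegral.integral_eq_sub_of_hasDerivAt (f := fun s => -φ 0 s / 2)
        (fun t _ => ((hφ 0 t).neg.div_const 2).congr_deriv (by ring))
        (hcont.intervalIntegrable 0 T)]
      ring
    simp only [pow_zero, one_mul, hFTC, Nat.factorial_zero, Nat.cast_one]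
    linarith [hφ_nonneg 0 T hT, hφ_nonneg 0 0 le_rfl, hD 0 le_rfl]
  | succ k ih =>
    have hIH := ih fun j hj => hD j (by omega)
    have hD_nonneg : 0 ≤ D := (hφ_nonneg 0 0 le_rfl).trans (hD 0 (Nat.zero_le _))
    have hboundary : 0 ≤ (1 + T) ^ (k + 1) * φ (k + 1) T :=
      mul_nonneg (pow_nonneg (by linarith) _) (hφ_nonneg _ T hT)
    have hfact : (1 : ℝ) ≤ (k + 1) * k.factorial := by
      exact_mod_cast Nat.one_le_of_lt (Nat.factorial_pos (k + 1))
    rw [integral_one_add_pow_succ_mul_eq hφ, Nat.factorial_succ]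
    push_cast
    nlinarith [hD (k + 1) le_rfl, mul_le_mul_of_nonneg_right hfact hD_nonneg,
      mul_le_mul_of_nonneg_left hIH (by positivity : (0 : ℝ) ≤ (k + 1) / 2)]

end SemigroupIntegrals

namespace ContinuousLinearMap

section RCLike

variable {𝕜 E : Type*} [RCLike 𝕜] [NormedAddCommGroup E] [InnerProductSpace 𝕜 E] [CompleteSpace E]
  {T : E →L[𝕜] E}

theorem IsPositive.pow (hT : T.IsPositive) (n : ℕ) : (T ^ n).IsPositive := by
  induction n using Nat.twoStepInduction with
  | zero => simp [isPositive_one]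
  | one => simpa using hT
  | more n ih _ =>
    have h := ih.conj_adjoint T
    rw [hT.isSelfAdjoint.adjoint_eq] at h
    rwa [pow_succ, pow_succ', mul_assoc]

theorem IsPositive.mul_mul_self_of_commute (hT : T.IsPositive) {S : E →L[𝕜] E}
    (hS : IsSelfAdjoint S) (hTS : Commute T S) : (T * (S * S)).IsPositive := by
  have h : T * (S * S) = S ∘L T ∘L adjoint S := by
    rw [hS.adjoint_eq, ← mul_assoc, hTS.eq, mul_assoc]
    rfl
  exact h ▸ hT.conj_adjoint S

end RCLike

variable {H : Type*} [NormedAddCommGroup H] [InnerProductSpace ℝ H] {A : H →L[ℝ] H}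

theorem IsPositive.inner_mul_inner_le (hA : A.IsPositive) (x y : H) :
    ⟪A x, y⟫ * ⟪A y, x⟫ ≤ ⟪A x, x⟫ * ⟪A y, y⟫ :=
  LinearMap.BilinForm.apply_mul_apply_le_of_forall_zero_le ((innerₗ H).comp (A : H →ₗ[ℝ] H))
    hA.inner_nonneg_left x y

variable [CompleteSpace H]

theorem IsPositive.inner_pow_succ_sq_le (hA : A.IsPositive) (f : H) (j : ℕ) :
    ⟪(A ^ (j + 1)) f, f⟫ ^ 2 ≤ ⟪(A ^ j) f, f⟫ * ⟪(A ^ (j + 2)) f, f⟫ := by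
  have h := (hA.pow j).inner_mul_inner_le f (A f)
  rw [← hA.isSelfAdjoint.adjoint_eq, adjoint_inner_right, adjoint_inner_right,
    hA.isSelfAdjoint.adjoint_eq] at h
  simp only [← mul_apply_eq_comp, ← pow_succ, ← pow_succ'] at h
  rwa [sq]

theorem IsPositive.inner_pow_le_add (hA : A.IsPositive) (f : H) {j m : ℕ} (hjm : j ≤ m) :
    ⟪(A ^ j) f, f⟫ ≤ ‖f‖ ^ 2 + ⟪(A ^ m) f, f⟫ := by
  have h : ⟪(A ^ j) f, f⟫ ≤ max ⟪(A ^ 0) f, f⟫ ⟪(A ^ m) f, f⟫ :=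
    le_max_endpoints_of_sq_le_mul (fun k => (hA.pow k).inner_nonneg_left f)
      (hA.inner_pow_succ_sq_le f) hjm
  rw [pow_zero, one_apply_eq_self, real_inner_self_eq_norm_sq] at h
  exact h.trans (max_le_add_of_nonneg (by positivity) ((hA.pow m).inner_nonneg_left f))

theorem hasDerivAt_inner_pow_exp_apply (A : H →L[ℝ] H) (f : H) (k : ℕ) (t : ℝ) :
    HasDerivAt (fun s : ℝ => ⟪(A ^ k) (NormedSpace.exp ((-(2 * s)) • A) f), f⟫)
      (-2 * ⟪(A ^ (k + 1)) (NormedSpace.exp ((-(2 * t)) • A) f), f⟫) t := by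
  have hsmul : ∀ s : ℝ, (-(2 * s)) • A = s • ((-2 : ℝ) • A) := fun s => by
    rw [smul_smul]; ring_nf
  have h := (((innerSL ℝ f).comp (A ^ k)).comp (apply ℝ H f)).hasFDerivAt.comp_hasDerivAt t
    (hasDerivAt_exp_smul_const' ((-2 : ℝ) • A) t)
  simp only [← hsmul, Function.comp_def, coe_comp, Function.comp_apply, apply_apply,
    innerSL_apply_apply, mul_apply_eq_comp, smul_apply, map_smul, inner_smul_right] at h
  simpa only [real_inner_comm f, pow_succ, mul_apply_eq_comp] using h

theorem IsPositive.inner_pow_exp_apply_nonneg (hA : A.IsPositive) (f : H) (k : ℕ) (t : ℝ) :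
    0 ≤ ⟪(A ^ k) (NormedSpace.exp ((-(2 * t)) • A) f), f⟫ := by
  have hsplit : NormedSpace.exp ((-(2 * t)) • A) =
      NormedSpace.exp ((-t) • A) * NormedSpace.exp ((-t) • A) := by
    rw [← NormedSpace.exp_add_of_commute_of_mem_ball (𝕂 := ℝ) (Commute.refl _)
      (by simp [NormedSpace.expSeries_radius_eq_top])
      (by simp [NormedSpace.expSeries_radius_eq_top]), ← add_smul]
    ring_nf
  rw [hsplit, ← mul_apply_eq_comp]
  exact ((hA.pow k).mul_mul_self_of_commute ((IsSelfAdjoint.all (-t)).smul hA.isSelfAdjoint).exp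
    (((Commute.refl A).smul_right (-t)).exp_right.pow_left k)).inner_nonneg_left f

end ContinuousLinearMap

theorem stmt_15 :
    ∀ m : ℕ, ∃ C : ℝ, 0 < C ∧
      ∀ (H : Type u) [NormedAddCommGroup H] [InnerProductSpace ℝ H] [CompleteSpace H]
        (A : H →L[ℝ] H), IsSelfAdjoint A → (∀ x : H, 0 ≤ ⟪A x, x⟫) →
        ∀ f : H,
          (∫ t in Set.Ioi (0:ℝ),
              (1 + t) ^ m * ⟪(A ^ (m + 1)) (NormedSpace.exp ((-(2 * t)) • A) f), f⟫)
            ≤ C * (‖f‖ ^ 2 + ⟪(A ^ m) f, f⟫) := by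
  intro m
  refine ⟨m.factorial, by exact_mod_cast m.factorial_pos, ?_⟩
  intro H _ _ _ A hA_sa hA_nonneg f
  have hA : A.IsPositive := (ContinuousLinearMap.isPositive_iff' A).2 ⟨hA_sa, hA_nonneg⟩
  have hderiv := ContinuousLinearMap.hasDerivAt_inner_pow_exp_apply A f
  have hnonneg := hA.inner_pow_exp_apply_nonneg f
  refine setIntegral_Ioi_le_of_forall_intervalIntegral_le ?_
    (fun t ht => mul_nonneg (pow_nonneg (by linarith) m) (hnonneg _ t)) fun T hT => ?_
  · exact (continuous_const.add continuous_id).pow m |>.mul <|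
      continuous_iff_continuousAt.2 fun t => (hderiv (m + 1) t).continuousAt
  · exact integral_one_add_pow_mul_le_factorial hderiv (fun k t _ => hnonneg k t) m
      (fun j hj => by simpa using hA.inner_pow_le_add f hj) hT
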